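/- For positive reals a ≠ b define λ_s(a,b) = ((s-1)/(s+1)) · (a^{s+1}+b^{s+1}-2((a+b)/2)^{s+1}) / (a^s+b^s-2((a+b)/2)^s) for s ∉ {-1,0,1}. Then λ_s(a,b) is monotone increasing as a function of s on ℝ \ {-1,0,1}. -/

import Mathlib

noncomputable def lam (s a b : ℝ) : ℝ :=
  ((s - 1) / (s + 1)) *
    (a ^ (s + 1) + b ^ (s + 1) - 2 * ((a + b) / 2) ^ (s + 1)) /
    (a ^ s + b ^ s - 2 * ((a + b) / 2) ^ s)

/-!
For `0 < a < b` and `t ∉ {-1, -2}`, integrating `x ^ t` against the tent `min (x - a) (b - x)` on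
`[a, b]` gives `(a ^ (t+2) + b ^ (t+2) - 2 ((a+b)/2) ^ (t+2)) / ((t+1)(t+2))`, so
`λ_s = M (s - 1) / M (s - 2)` where `M t` is this tent moment. By Hölder's inequality `log M` is
convex, hence its increments `log M t - log M (t - 1)` increase with `t`.
-/

open MeasureTheory Set Real

section WeightedMoments
variable {α : Type*} [MeasurableSpace α] {μ : Measure α}

theorem integral_rpow_mul_rpow_le {f g : α → ℝ} (hf : 0 ≤ᵐ[μ] f) (hg : 0 ≤ᵐ[μ] g)
    (hfi : Integrable f μ) (hgi : Integrable g μ) {p q : ℝ} (hp : 0 ≤ p) (hq : 0 ≤ q)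
    (hpq : p + q = 1) :
    ∫ x, f x ^ p * g x ^ q ∂μ ≤ (∫ x, f x ∂μ) ^ p * (∫ x, g x ∂μ) ^ q := by
  have hfg : 0 ≤ᵐ[μ] fun x => f x ^ p * g x ^ q := by
    filter_upwards [hf, hg] with x hfx hgx
    exact mul_nonneg (rpow_nonneg hfx p) (rpow_nonneg hgx q)
  rw [integral_eq_lintegral_of_nonneg_ae hf hfi.1, integral_eq_lintegral_of_nonneg_ae hg hgi.1,
    integral_eq_lintegral_of_nonneg_ae hfg
      ((hfi.1.aemeasurable.pow_const p).mul (hgi.1.aemeasurable.pow_const q)).aestronglyMeasurable,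
    ENNReal.toReal_rpow, ENNReal.toReal_rpow, ← ENNReal.toReal_mul]
  have hofReal : (fun x => ENNReal.ofReal (f x ^ p * g x ^ q)) =ᵐ[μ]
      fun x => ENNReal.ofReal (f x) ^ p * ENNReal.ofReal (g x) ^ q := by
    filter_upwards [hf, hg] with x hfx hgx
    rw [ENNReal.ofReal_mul (rpow_nonneg hfx p), ENNReal.ofReal_rpow_of_nonneg hfx hp,
      ENNReal.ofReal_rpow_of_nonneg hgx hq]
  rw [lintegral_congr_ae hofReal]
  refine ENNReal.toReal_mono (ENNReal.mul_ne_top ?_ ?_) (ENNReal.lintegral_mul_norm_pow_le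
    hfi.1.aemeasurable.ennreal_ofReal hgi.1.aemeasurable.ennreal_ofReal hp hq hpq)
  · exact ENNReal.rpow_ne_top_of_nonneg hp
      ((lintegral_ofReal_ne_top_iff_integrable hfi.1 hf).2 hfi)
  · exact ENNReal.rpow_ne_top_of_nonneg hq
      ((lintegral_ofReal_ne_top_iff_integrable hgi.1 hg).2 hgi)

theorem convexOn_log_integral_mul_rpow {w g : α → ℝ} (hw : 0 ≤ᵐ[μ] w) (hg : ∀ᵐ x ∂μ, 0 < g x)
    (hpos : ∀ t : ℝ, 0 < ∫ x, w x * g x ^ t ∂μ) :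
    ConvexOn ℝ univ fun t : ℝ => log (∫ x, w x * g x ^ t ∂μ) := by
  refine ⟨convex_univ, fun u _ v _ p q hp hq hpq => ?_⟩
  have hsplit : ∀ x, 0 ≤ w x → 0 < g x →
      w x * g x ^ (p * u + q * v) = (w x * g x ^ u) ^ p * (w x * g x ^ v) ^ q := by
    intro x hwx hgx
    rw [mul_rpow hwx (rpow_nonneg hgx.le u), mul_rpow hwx (rpow_nonneg hgx.le v),
      ← rpow_mul hgx.le, ← rpow_mul hgx.le, mul_mul_mul_comm, ← rpow_add' hwx (by simp [hpq]),
      ← rpow_add hgx, hpq, rpow_one, mul_comm u, mul_comm v]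
  have hmoment_nonneg : ∀ t : ℝ, 0 ≤ᵐ[μ] fun x => w x * g x ^ t := fun t => by
    filter_upwards [hw, hg] with x hwx hgx
    exact mul_nonneg hwx (rpow_nonneg hgx.le t)
  have holder : ∫ x, w x * g x ^ (p * u + q * v) ∂μ
      ≤ (∫ x, w x * g x ^ u ∂μ) ^ p * (∫ x, w x * g x ^ v ∂μ) ^ q := by
    rw [integral_congr_ae (by filter_upwards [hw, hg] with x hwx hgx using hsplit x hwx hgx)]
    exact integral_rpow_mul_rpow_le (hmoment_nonneg u) (hmoment_nonneg v)
      (Integrable.of_integral_ne_zero (hpos u).ne') (Integrable.of_integral_ne_zero (hpos v).ne')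
      hp hq hpq
  calc log (∫ x, w x * g x ^ (p • u + q • v) ∂μ)
      ≤ log ((∫ x, w x * g x ^ u ∂μ) ^ p * (∫ x, w x * g x ^ v ∂μ) ^ q) :=
        log_le_log (hpos _) holder
    _ = p • log (∫ x, w x * g x ^ u ∂μ) + q • log (∫ x, w x * g x ^ v ∂μ) := by
        rw [log_mul (rpow_pos_of_pos (hpos u) p).ne' (rpow_pos_of_pos (hpos v) q).ne',
          log_rpow (hpos u), log_rpow (hpos v), smul_eq_mul, smul_eq_mul]

end WeightedMoments

theorem ConvexOn.sub_le_sub_of_le {f : ℝ → ℝ} (hf : ConvexOn ℝ univ f) {h u v : ℝ} (hh : 0 < h)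
    (huv : u ≤ v) : f u - f (u - h) ≤ f v - f (v - h) := by
  have left : slope f (u - h) u ≤ slope f (u - h) v :=
    hf.slope_mono (mem_univ _) ⟨mem_univ _, by simp; linarith⟩ ⟨mem_univ _, by simp; linarith⟩ huv
  have right : slope f v (u - h) ≤ slope f v (v - h) :=
    hf.slope_mono (mem_univ _) ⟨mem_univ _, by simp; linarith⟩ ⟨mem_univ _, by simp; linarith⟩
      (by linarith)
  rw [slope_comm f v, slope_comm f v] at right
  have := left.trans right
  simp only [slope_def_field, sub_sub_cancel] at this
  exact (div_le_div_iff_of_pos_right hh).1 this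

theorem integral_sub_mul_rpow {α β d t : ℝ} (hα : 0 < α) (hβ : 0 < β) (ht₁ : t ≠ -1)
    (ht₂ : t ≠ -2) :
    ∫ x in α..β, (x - d) * x ^ t
      = (β ^ (t + 2) - α ^ (t + 2)) / (t + 2) - d * ((β ^ (t + 1) - α ^ (t + 1)) / (t + 1)) := by
  have hzero : (0 : ℝ) ∉ uIcc α β := fun h => (lt_min hα hβ).not_ge h.1
  have hexpand : ∀ x ∈ uIcc α β, (x - d) * x ^ t = x ^ (t + 1) - d * x ^ t := fun x hx => by
    rw [rpow_add_one (ne_of_mem_of_not_mem hx hzero)]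
    ring
  rw [intervalIntegral.integral_congr hexpand, intervalIntegral.integral_sub
      (intervalIntegral.intervalIntegrable_rpow (Or.inr hzero))
      ((intervalIntegral.intervalIntegrable_rpow (Or.inr hzero)).const_mul d),
    intervalIntegral.integral_const_mul,
    integral_rpow (Or.inr ⟨by contrapose! ht₂; linarith, hzero⟩),
    integral_rpow (Or.inr ⟨ht₁, hzero⟩), add_assoc, one_add_one_eq_two]

noncomputable def tentMoment (a b t : ℝ) : ℝ := ∫ x in a..b, min (x - a) (b - x) * x ^ t

theorem intervalIntegrable_tent_mul_rpow {a b c d : ℝ} (hc : 0 < c) (hd : 0 < d) (t : ℝ) :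
    IntervalIntegrable (fun x => min (x - a) (b - x) * x ^ t) volume c d := by
  have hzero : (0 : ℝ) ∉ uIcc c d := fun h => (lt_min hc hd).not_ge h.1
  refine ContinuousOn.intervalIntegrable ?_
  exact ((continuous_sub_right a).min (continuous_sub_left b)).continuousOn.mul
    (continuousOn_id.rpow_const fun x hx => Or.inl (ne_of_mem_of_not_mem hx hzero))

theorem tentMoment_eq {a b t : ℝ} (ha : 0 < a) (hab : a ≤ b) (ht₁ : t ≠ -1) (ht₂ : t ≠ -2) :
    tentMoment a b t
      = (a ^ (t + 2) + b ^ (t + 2) - 2 * ((a + b) / 2) ^ (t + 2)) / ((t + 1) * (t + 2)) := by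
  have hb : 0 < b := ha.trans_le hab
  have hc : 0 < (a + b) / 2 := by positivity
  have left : ∫ x in a..(a + b) / 2, min (x - a) (b - x) * x ^ t
      = ∫ x in a..(a + b) / 2, (x - a) * x ^ t := by
    refine intervalIntegral.integral_congr fun x hx => ?_
    rw [uIcc_of_le (by linarith)] at hx
    rw [min_eq_left (by linarith [hx.2])]
  have right : ∫ x in (a + b) / 2..b, min (x - a) (b - x) * x ^ t
      = -∫ x in (a + b) / 2..b, (x - b) * x ^ t := by
    rw [← intervalIntegral.integral_neg]
    refine intervalIntegral.integral_congr fun x hx => ?_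
    rw [uIcc_of_le (by linarith)] at hx
    simp only [min_eq_right (by linarith [hx.1] : b - x ≤ x - a)]
    ring
  have hpow : ∀ x : ℝ, 0 < x → x ^ (t + 2) = x ^ (t + 1) * x := fun x hx => by
    rw [← rpow_add_one hx.ne']
    ring_nf
  have ht₁' : t + 1 ≠ 0 := by contrapose! ht₁; linarith
  have ht₂' : t + 2 ≠ 0 := by contrapose! ht₂; linarith
  rw [tentMoment, ← intervalIntegral.integral_add_adjacent_intervals
      (intervalIntegrable_tent_mul_rpow ha hc t) (intervalIntegrable_tent_mul_rpow hc hb t),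
    left, right, integral_sub_mul_rpow ha hc ht₁ ht₂, integral_sub_mul_rpow hc hb ht₁ ht₂,
    hpow a ha, hpow b hb, hpow _ hc]
  field_simp
  ring

theorem tentMoment_pos {a b : ℝ} (ha : 0 < a) (hab : a < b) (t : ℝ) : 0 < tentMoment a b t :=
  intervalIntegral.intervalIntegral_pos_of_pos_on
    (intervalIntegrable_tent_mul_rpow ha (ha.trans hab) t)
    (fun x hx => mul_pos (lt_min (by linarith [hx.1]) (by linarith [hx.2]))
      (rpow_pos_of_pos (ha.trans hx.1) t)) hab

theorem convexOn_log_tentMoment {a b : ℝ} (ha : 0 < a) (hab : a < b) :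
    ConvexOn ℝ univ fun t => log (tentMoment a b t) := by
  have hrestrict : ∀ t, tentMoment a b t
      = ∫ x, min (x - a) (b - x) * x ^ t ∂volume.restrict (Ioc a b) :=
    fun t => intervalIntegral.integral_of_le hab.le
  simp only [hrestrict]
  refine convexOn_log_integral_mul_rpow ?_ ?_ fun t => hrestrict t ▸ tentMoment_pos ha hab t
  · filter_upwards [ae_restrict_mem measurableSet_Ioc] with x hx
    exact le_min (sub_nonneg.2 hx.1.le) (sub_nonneg.2 hx.2)
  · filter_upwards [ae_restrict_mem measurableSet_Ioc] with x hx using ha.trans hx.1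

theorem lam_eq_tentMoment_div {a b s : ℝ} (ha : 0 < a) (hab : a < b)
    (hs : s ∉ ({-1, 0, 1} : Set ℝ)) :
    lam s a b = tentMoment a b (s - 1) / tentMoment a b (s - 2) := by
  simp only [mem_insert_iff, mem_singleton_iff, not_or] at hs
  obtain ⟨hs_neg_one, hs_zero, hs_one⟩ := hs
  have hnum := tentMoment_eq (t := s - 1) ha hab.le (by contrapose! hs_zero; linarith)
    (by contrapose! hs_neg_one; linarith)
  have hden := tentMoment_eq (t := s - 2) ha hab.le (by contrapose! hs_one; linarith)
    (by contrapose! hs_zero; linarith)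
  have hden_pos := tentMoment_pos ha hab (s - 2)
  norm_num only [sub_add_cancel, show s - 1 + 2 = s + 1 by ring, show s - 2 + 1 = s - 1 by ring,
    show s - 2 + 2 = s by ring] at hnum hden
  rw [hden] at hden_pos
  have hs_add : s + 1 ≠ 0 := by contrapose! hs_neg_one; linarith
  have hs_sub : s - 1 ≠ 0 := by contrapose! hs_one; linarith
  have hD : a ^ s + b ^ s - 2 * ((a + b) / 2) ^ s ≠ 0 := by
    rintro hD
    simp [hD] at hden_pos
  rw [lam, hnum, hden]
  field_simp

theorem monotoneOn_lam {a b : ℝ} (ha : 0 < a) (hab : a < b) :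
    MonotoneOn (fun s => lam s a b) ({-1, 0, 1} : Set ℝ)ᶜ := by
  intro s₁ hs₁ s₂ hs₂ hs
  have hM := tentMoment_pos ha hab
  have hlog := (convexOn_log_tentMoment ha hab).sub_le_sub_of_le one_pos (sub_le_sub_right hs 1)
  simp only [← log_div (hM _).ne' (hM _).ne', sub_sub, one_add_one_eq_two] at hlog
  rw [log_le_log_iff (div_pos (hM _) (hM _)) (div_pos (hM _) (hM _))] at hlog
  simpa only [lam_eq_tentMoment_div ha hab hs₁, lam_eq_tentMoment_div ha hab hs₂] using hlog

theorem lam_comm (s a b : ℝ) : lam s a b = lam s b a := by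
  rw [lam, lam, add_comm a b, add_comm (a ^ (s + 1)), add_comm (a ^ s)]

theorem stmt7 (a b : ℝ) (ha : 0 < a) (hb : 0 < b) (hab : a ≠ b)
    (s₁ s₂ : ℝ) (hs₁ : s₁ ∉ ({-1, 0, 1} : Set ℝ)) (hs₂ : s₂ ∉ ({-1, 0, 1} : Set ℝ))
    (hs : s₁ ≤ s₂) : lam s₁ a b ≤ lam s₂ a b := by
  rcases hab.lt_or_gt with hab | hba
  · exact monotoneOn_lam ha hab hs₁ hs₂ hs
  · rw [lam_comm s₁, lam_comm s₂]
    exact monotoneOn_lam hb hba hs₁ hs₂ hs
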